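/- arXiv:0808.2977 — 2 statements merged into one kernel-verified Lean document; each statement's English description precedes it below -/
import Mathlib

section
/- For every integer N ≥ 2, the matrix A has exactly the eigenvalues k(k−1) for k = 2, 3, …, N; that is, the characteristic polynomial of A is ∏_{k=2}^{N} (λ − k(k−1)), and in particular A has N−1 distinct simple real eigenvalues 2, 6, 12, …, N(N−1). -/
/-!
Sample `x ↦ x (x - N) p x` at the nodes `x = 1, …, N - 1`. Since `x (x - N)` vanishes at the
boundary nodes `0` and `N`, `Aᵀ` maps such a sample to the sample of `x (x - N) · Δ²(X (X - N) p)`,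
where `Δ²` is the central second difference. For `p = X ^ k` the polynomial `Δ²(X ^ k · X (X - N))`
has degree `k` and leading coefficient `(k + 2) (k + 1)`. The samples for `k < N - 1` form an
invertible matrix (a diagonal matrix times a Vandermonde matrix), so `Aᵀ` is similar to an upper
triangular matrix with diagonal entries `(k + 2) (k + 1)`, `k = 0, …, N - 2`.
-/

noncomputable section

/-- The (N−1)×(N−1) matrix A (with 1-based index jᵥ = j+1):
A_{i,j} = 2jᵥ(N−jᵥ) if i = j, −jᵥ(N−jᵥ) if |i−j| = 1, 0 otherwise. -/
def matA (N : ℕ) : Matrix (Fin (N - 1)) (Fin (N - 1)) ℝ :=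
  Matrix.of fun i j =>
    if i = j then 2 * (((j : ℕ) + 1 : ℝ) * ((N : ℝ) - ((j : ℕ) + 1)))
    else if (i : ℕ) + 1 = (j : ℕ) ∨ (j : ℕ) + 1 = (i : ℕ) then
      -(((j : ℕ) + 1 : ℝ) * ((N : ℝ) - ((j : ℕ) + 1)))
    else 0

open Polynomial Matrix

section SecondDiff

variable {R : Type*} [CommRing R]

def secondDiff (p : R[X]) : R[X] :=
  p.comp (X + 1) - 2 * p + p.comp (X - 1)

theorem eval_secondDiff (p : R[X]) (x : R) :
    (secondDiff p).eval x = p.eval (x + 1) - 2 * p.eval x + p.eval (x - 1) := by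
  simp [secondDiff, eval_comp]

theorem secondDiff_sub (p q : R[X]) : secondDiff (p - q) = secondDiff p - secondDiff q := by
  simp only [secondDiff, sub_comp]
  ring

theorem secondDiff_C_mul (a : R) (p : R[X]) : secondDiff (C a * p) = C a * secondDiff p := by
  simp only [secondDiff, mul_comp, C_comp]
  ring

theorem coeff_secondDiff_X_pow (n l : ℕ) :
    (secondDiff (X ^ n : R[X])).coeff l
      = n.choose l * (1 + (-1) ^ (n - l)) - if l = n then 2 else 0 := by
  rw [secondDiff, X_pow_comp, X_pow_comp, sub_eq_add_neg (X : R[X]) 1, ← C_1, ← C_neg,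
    coeff_add, coeff_sub, coeff_X_add_C_pow, coeff_X_add_C_pow, coeff_ofNat_mul, coeff_X_pow]
  split_ifs <;> ring

theorem coeff_secondDiff_X_pow_of_le {n l : ℕ} (h : n ≤ l + 1) :
    (secondDiff (X ^ n : R[X])).coeff l = 0 := by
  rw [coeff_secondDiff_X_pow]
  obtain h | rfl | rfl : n < l ∨ n = l ∨ n = l + 1 := by omega
  · simp [Nat.choose_eq_zero_of_lt h, h.ne']
  · norm_num
  · simp

theorem coeff_secondDiff_X_pow_add_two (n : ℕ) :
    (secondDiff (X ^ (n + 2) : R[X])).coeff n = (n + 2) * (n + 1) := by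
  have h : (n + 2).choose n * 2 = (n + 2) * (n + 1) := by
    rw [Nat.choose_symm_add, Nat.choose_two_right,
      Nat.div_mul_cancel (Nat.even_mul_pred_self _).two_dvd]
    rfl
  rw [coeff_secondDiff_X_pow, if_neg (by omega), Nat.add_sub_cancel_left]
  norm_num
  simpa using congrArg (Nat.cast : ℕ → R) h

end SecondDiff

theorem Matrix.charpoly_eq_of_mul_eq_mul {n R : Type*} [Fintype n] [DecidableEq n] [CommRing R]
    {A B P : Matrix n n R} (hP : IsUnit P.det) (h : A * P = P * B) :
    A.charpoly = B.charpoly := by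
  have hB : B = P⁻¹ * (A * P) := by
    rw [h, ← Matrix.mul_assoc, nonsing_inv_mul _ hP, Matrix.one_mul]
  rw [hB, charpoly_mul_comm, Matrix.mul_assoc, mul_nonsing_inv _ hP, Matrix.mul_one]

theorem Matrix.vandermonde_mul_of_coeff {R : Type*} [CommRing R] {n : ℕ} (v : Fin n → R)
    (p : Fin n → R[X]) (hp : ∀ k, (p k).natDegree < n) :
    vandermonde v * of (fun (l : Fin n) k => (p k).coeff l) = of fun j k => (p k).eval (v j) := by
  ext j k
  rw [mul_apply, of_apply, eval_eq_sum_range' (hp k), ← Fin.sum_univ_eq_sum_range]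
  simp only [vandermonde_apply, of_apply, mul_comm]

theorem matA_apply (N : ℕ) (i j : Fin (N - 1)) :
    matA N i j = ((j : ℕ) + 1 : ℝ) * (N - ((j : ℕ) + 1)) *
      ((if (i : ℕ) = j then 2 else 0) - (if (i : ℕ) + 1 = j then 1 else 0)
        - (if (i : ℕ) = j + 1 then 1 else 0)) := by
  simp only [matA, of_apply, Fin.ext_iff]
  split_ifs <;> first | omega | ring

theorem transpose_matA_mulVec (N : ℕ) (f : ℝ → ℝ) (h0 : f 0 = 0) (hN : f N = 0)
    (j : Fin (N - 1)) :
    ((matA N)ᵀ *ᵥ fun i => f ((i : ℕ) + 1)) j =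
      ((j : ℕ) + 1 : ℝ) * (N - ((j : ℕ) + 1)) * (2 * f ((j : ℕ) + 1) - f j - f ((j : ℕ) + 2)) := by
  have hj := j.2
  obtain ⟨M, rfl⟩ : ∃ M, N = M + 2 := ⟨N - 2, by omega⟩
  set g : ℕ → ℝ := fun m => ((if m = (j : ℕ) + 1 then 2 else 0) - (if m = (j : ℕ) then 1 else 0)
    - (if m = (j : ℕ) + 2 then 1 else 0)) * f m with hg
  -- `f` vanishes at both boundary nodes, so the sum over the interior nodes is a sum over all nodes
  have hsum : ∑ m ∈ Finset.range (M + 3), g m = ∑ i : Fin (M + 2 - 1), g ((i : ℕ) + 1) := by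
    rw [Fin.sum_univ_eq_sum_range (fun i => g (i + 1)), Finset.sum_range_succ,
      Finset.sum_range_succ']
    push_cast at hN
    simp [hg, h0, hN]
  have hrange : ∑ m ∈ Finset.range (M + 3), g m = 2 * f ((j : ℕ) + 1) - f j - f ((j : ℕ) + 2) := by
    simp only [hg, sub_mul, ite_mul, zero_mul, Finset.sum_sub_distrib, Finset.sum_ite_eq',
      Finset.mem_range]
    rw [if_pos (by omega), if_pos (by omega), if_pos (by omega)]
    push_cast
    ring
  rw [← hrange, hsum]
  simp only [mulVec, dotProduct, transpose_apply, matA_apply, Finset.mul_sum]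
  refine Finset.sum_congr rfl fun i _ => ?_
  simp only [hg]
  push_cast
  split_ifs <;> first | omega | ring

def weightedMonomial (N k : ℕ) : ℝ[X] := X ^ k * (X * (X - C (N : ℝ)))

theorem secondDiff_weightedMonomial (N k : ℕ) :
    secondDiff (weightedMonomial N k)
      = secondDiff (X ^ (k + 2)) - C (N : ℝ) * secondDiff (X ^ (k + 1)) := by
  rw [weightedMonomial, show (X : ℝ[X]) ^ k * (X * (X - C (N : ℝ)))
      = X ^ (k + 2) - C (N : ℝ) * X ^ (k + 1) by ring, secondDiff_sub, secondDiff_C_mul]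

theorem coeff_secondDiff_weightedMonomial_of_lt (N : ℕ) {k l : ℕ} (h : k < l) :
    (secondDiff (weightedMonomial N k)).coeff l = 0 := by
  rw [secondDiff_weightedMonomial, coeff_sub, coeff_C_mul, coeff_secondDiff_X_pow_of_le (by omega),
    coeff_secondDiff_X_pow_of_le (by omega), mul_zero, sub_zero]

theorem coeff_secondDiff_weightedMonomial_self (N k : ℕ) :
    (secondDiff (weightedMonomial N k)).coeff k = (k + 2) * (k + 1) := by
  rw [secondDiff_weightedMonomial, coeff_sub, coeff_C_mul, coeff_secondDiff_X_pow_add_two,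
    coeff_secondDiff_X_pow_of_le (by omega), mul_zero, sub_zero]

theorem natDegree_secondDiff_weightedMonomial_le (N k : ℕ) :
    (secondDiff (weightedMonomial N k)).natDegree ≤ k :=
  natDegree_le_iff_coeff_eq_zero.2 fun _ => coeff_secondDiff_weightedMonomial_of_lt N

def weightedVandermonde (N : ℕ) : Matrix (Fin (N - 1)) (Fin (N - 1)) ℝ :=
  diagonal (fun j : Fin (N - 1) => ((j : ℕ) + 1 : ℝ) * ((j : ℕ) + 1 - N)) *
    vandermonde fun j => ((j : ℕ) + 1 : ℝ)

def secondDiffMatrix (N : ℕ) : Matrix (Fin (N - 1)) (Fin (N - 1)) ℝ :=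
  of fun l k => (secondDiff (weightedMonomial N k)).coeff l

theorem weightedVandermonde_apply (N : ℕ) (j k : Fin (N - 1)) :
    weightedVandermonde N j k = (weightedMonomial N k).eval ((j : ℕ) + 1 : ℝ) := by
  simp only [weightedVandermonde, diagonal_mul, vandermonde_apply, weightedMonomial, eval_mul,
    eval_pow, eval_X, eval_sub, eval_C]
  ring

theorem isUnit_det_weightedVandermonde (N : ℕ) : IsUnit (weightedVandermonde N).det := by
  rw [weightedVandermonde, det_mul, det_diagonal, isUnit_iff_ne_zero]
  refine mul_ne_zero (Finset.prod_ne_zero_iff.2 fun j _ => ?_) (det_vandermonde_ne_zero_iff.2 ?_)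
  · have hj : ((j : ℕ) + 1 : ℝ) < N := by exact_mod_cast (by omega : (j : ℕ) + 1 < N)
    exact mul_ne_zero (by positivity) (by linarith)
  · intro i j h
    exact Fin.ext (by simpa using h)

theorem secondDiffMatrix_isUpperTriangular (N : ℕ) : (secondDiffMatrix N).IsUpperTriangular :=
  fun _ _ h => coeff_secondDiff_weightedMonomial_of_lt N h

theorem transpose_matA_mul_weightedVandermonde (N : ℕ) :
    (matA N)ᵀ * weightedVandermonde N = weightedVandermonde N * secondDiffMatrix N := by
  rw [weightedVandermonde, Matrix.mul_assoc, secondDiffMatrix, vandermonde_mul_of_coeff _ _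
    fun k => (natDegree_secondDiff_weightedMonomial_le N k).trans_lt k.2, ← weightedVandermonde]
  ext j k
  rw [diagonal_mul, of_apply, eval_secondDiff]
  have hcol : (fun i => weightedVandermonde N i k)
      = fun i : Fin (N - 1) => (weightedMonomial N k).eval ((i : ℕ) + 1 : ℝ) :=
    funext fun i => weightedVandermonde_apply N i k
  have hmulVec := transpose_matA_mulVec N (fun x => (weightedMonomial N k).eval x)
    (by simp [weightedMonomial]) (by simp [weightedMonomial]) j
  rw [← hcol] at hmulVec
  rw [show ((matA N)ᵀ * weightedVandermonde N) j k
      = ((matA N)ᵀ *ᵥ fun i => weightedVandermonde N i k) j from rfl, hmulVec]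
  ring_nf

theorem Nat.cast_mul_sub_one_injOn : Set.InjOn (fun k : ℕ => (k : ℝ) * (k - 1)) (Set.Ici 1) := by
  intro k hk l hl h
  have hk : (1 : ℝ) ≤ k := by exact_mod_cast hk
  have hl : (1 : ℝ) ≤ l := by exact_mod_cast hl
  have hfac : ((k : ℝ) - l) * ((k : ℝ) + l - 1) = 0 := by
    simp only at h
    linear_combination h
  have hpos : (0 : ℝ) < k + l - 1 := by linarith
  exact Nat.cast_injective (sub_eq_zero.1 ((mul_eq_zero_iff_right hpos.ne').1 hfac))

theorem matA_charpoly_general (N : ℕ) :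
    (matA N).charpoly
      = ∏ k ∈ Finset.Icc 2 N, (Polynomial.X - Polynomial.C ((k : ℝ) * ((k : ℝ) - 1))) ∧
    ∀ k ∈ Finset.Icc 2 N, ∀ l ∈ Finset.Icc 2 N,
      (k : ℝ) * ((k : ℝ) - 1) = (l : ℝ) * ((l : ℝ) - 1) → k = l := by
  refine ⟨?_, fun k hk l hl => Nat.cast_mul_sub_one_injOn ?_ ?_⟩
  · rw [← charpoly_transpose, charpoly_eq_of_mul_eq_mul (isUnit_det_weightedVandermonde N)
      (transpose_matA_mul_weightedVandermonde N),
      charpoly_of_isUpperTriangular _ (secondDiffMatrix_isUpperTriangular N)]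
    simp only [secondDiffMatrix, of_apply, coeff_secondDiff_weightedMonomial_self]
    rw [Fin.prod_univ_eq_prod_range (fun i => X - C (((i : ℝ) + 2) * ((i : ℝ) + 1))),
      ← Finset.Ico_add_one_right_eq_Icc, Finset.prod_Ico_eq_prod_range,
      show N + 1 - 2 = N - 1 by omega]
    refine Finset.prod_congr rfl fun i _ => ?_
    push_cast
    ring_nf
  · exact le_trans one_le_two (Finset.mem_Icc.1 hk).1
  · exact le_trans one_le_two (Finset.mem_Icc.1 hl).1

/-- **Eigenvalues of A.** For every N ≥ 2, the characteristic polynomial of A is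
∏_{k=2}^{N} (λ − k(k−1)); in particular A has N−1 distinct simple real eigenvalues
2, 6, 12, …, N(N−1) (the values k(k−1) being pairwise distinct for k = 2, …, N). -/
theorem matA_charpoly (N : ℕ) (hN : 2 ≤ N) :
    (matA N).charpoly
      = ∏ k ∈ Finset.Icc 2 N, (Polynomial.X - Polynomial.C ((k : ℝ) * ((k : ℝ) - 1))) ∧
    ∀ k ∈ Finset.Icc 2 N, ∀ l ∈ Finset.Icc 2 N,
      (k : ℝ) * ((k : ℝ) - 1) = (l : ℝ) * ((l : ℝ) - 1) → k = l :=
  matA_charpoly_general N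
end
end

section
/- Fix an integer N ≥ 2 and r_h > 0. Suppose m̂ ∈ C¹([r_h, ∞)) and ω_j ∈ C¹([r_h, ∞)) ∩ C²((r_h, ∞)) for j = 1, …, N−1 satisfy, for all r > r_h, the zero-cosmological-length-limit black hole equations: m̂′(r) = (r² − 2m̂(r)/r) · Σ_{j=1}^{N−1} (ω_j′(r))² and, for each j, r²(r² − 2m̂(r)/r)·ω_j″(r) + (2m̂(r) + 2r³)·ω_j′(r) = 0, together with the horizon condition m̂(r_h) = r_h³/2 (so that μ̂(r_h) = 0, where μ̂(r) = r² − 2m̂(r)/r) and μ̂(r) > 0 for all r > r_h. Then the solution is unique and trivial: m̂(r) = r_h³/2 for all r ≥ r_h, and every ω_j is constant on [r_h, ∞). -/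
/-!
Since `m̂' = μ̂ · Σ (ω_j')² ≥ 0`, the mass is nondecreasing, hence `m̂ ≥ r_h³/2 > 0`. For each `j`
the energy `ω_j'² μ̂` is nonincreasing: the Yang–Mills equation gives
`r² (ω_j'² μ̂)' = -2 ω_j'² (m̂ + r³ + r m̂') ≤ 0`. It is nonnegative and tends to `0` at the horizon,
where `μ̂` vanishes while `ω_j'` stays bounded, so it vanishes identically. As `μ̂ > 0` outside the
horizon, `ω_j' = 0`; then `m̂' = 0` as well, and all fields are constant.
-/

open Filter Topology Set

lemma AntitoneOn.le_of_tendsto_nhdsGT {α β : Type*} [LinearOrder α] [TopologicalSpace α]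
    [OrderTopology α] [DenselyOrdered α] [NoMaxOrder α] [Preorder β] [TopologicalSpace β]
    [ClosedIciTopology β] {f : α → β} {a x : α} {L : β}
    (hf : AntitoneOn f (Ioi a)) (hL : Tendsto f (𝓝[>] a) (𝓝 L)) (hx : a < x) : f x ≤ L :=
  ge_of_tendsto hL (by filter_upwards [Ioo_mem_nhdsGT hx] with y hy; exact hf hy.1 hx hy.2.le)

section RealCalculus

variable {f f' : ℝ → ℝ} {a : ℝ}

lemma monotoneOn_Ici_of_hasDerivAt_nonneg (hf : ContinuousOn f (Ici a))
    (hf' : ∀ x > a, HasDerivAt f (f' x) x) (hf'₀ : ∀ x > a, 0 ≤ f' x) : MonotoneOn f (Ici a) :=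
  monotoneOn_of_hasDerivWithinAt_nonneg (convex_Ici a) hf
    (by rw [interior_Ici]; exact fun x hx => (hf' x hx).hasDerivWithinAt)
    (by rw [interior_Ici]; exact hf'₀)

lemma antitoneOn_Ioi_of_hasDerivAt_nonpos (hf' : ∀ x > a, HasDerivAt f (f' x) x)
    (hf'₀ : ∀ x > a, f' x ≤ 0) : AntitoneOn f (Ioi a) :=
  antitoneOn_of_hasDerivWithinAt_nonpos (convex_Ioi a)
    (fun x hx => (hf' x hx).continuousAt.continuousWithinAt)
    (by rw [interior_Ioi]; exact fun x hx => (hf' x hx).hasDerivWithinAt)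
    (by rw [interior_Ioi]; exact hf'₀)

lemma eq_of_hasDerivAt_zero_of_le (hf : ContinuousOn f (Ici a))
    (hf' : ∀ x > a, HasDerivAt f 0 x) {x : ℝ} (hx : a ≤ x) : f x = f a := by
  have hmono := monotoneOn_Ici_of_hasDerivAt_nonneg hf hf' fun _ _ => le_rfl
  have hanti := monotoneOn_Ici_of_hasDerivAt_nonneg hf.neg (fun x hx => (hf' x hx).neg)
    fun _ _ => neg_zero.ge
  have := hanti self_mem_Ici hx hx
  simp only [Pi.neg_apply, neg_le_neg_iff] at this
  exact le_antisymm this (hmono self_mem_Ici hx hx)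

lemma ContDiffOn.tendsto_deriv_nhdsGT (hf : ContDiffOn ℝ 1 f (Ici a)) :
    Tendsto (deriv f) (𝓝[>] a) (𝓝 (derivWithin f (Ici a) a)) := by
  have hcont := (hf.continuousOn_derivWithin (uniqueDiffOn_Ici a) le_rfl).continuousWithinAt
    self_mem_Ici
  refine (hcont.mono Ioi_subset_Ici_self).congr' ?_
  filter_upwards [self_mem_nhdsWithin] with x (hx : a < x)
  exact derivWithin_of_mem_nhds (Ici_mem_nhds hx)

lemma ContDiffOn.hasDerivAt_deriv_of_Ioi (hf : ContDiffOn ℝ 2 f (Ioi a)) {x : ℝ} (hx : a < x) :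
    HasDerivAt (deriv f) (deriv (deriv f) x) x :=
  (((hf.deriv_of_isOpen isOpen_Ioi (by norm_num)).differentiableOn one_ne_zero).differentiableAt
    (Ioi_mem_nhds hx)).hasDerivAt

end RealCalculus

lemma eq_zero_of_antitoneOn_sq_mul {u μ : ℝ → ℝ} {a L : ℝ}
    (hanti : AntitoneOn (fun r => u r ^ 2 * μ r) (Ioi a)) (hu : Tendsto u (𝓝[>] a) (𝓝 L))
    (hμ₀ : Tendsto μ (𝓝[>] a) (𝓝 0)) (hμ : ∀ r > a, 0 < μ r) {r : ℝ} (hr : a < r) :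
    u r = 0 := by
  have hlim : Tendsto (fun r => u r ^ 2 * μ r) (𝓝[>] a) (𝓝 0) := by
    simpa using (hu.pow 2).mul hμ₀
  have hsq : u r ^ 2 ≤ 0 := nonpos_of_mul_nonpos_left (hanti.le_of_tendsto_nhdsGT hlim hr) (hμ r hr)
  exact (pow_eq_zero_iff two_ne_zero).mp (le_antisymm hsq (sq_nonneg _))

noncomputable def muHat (m : ℝ → ℝ) (r : ℝ) : ℝ := r ^ 2 - 2 * m r / r

lemma hasDerivAt_muHat {m : ℝ → ℝ} {m' r : ℝ} (hm : HasDerivAt m m' r) (hr : r ≠ 0) :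
    HasDerivAt (muHat m) (2 * r - 2 * (m' * r - m r) / r ^ 2) r := by
  have h := (hasDerivAt_pow 2 r).sub ((hm.const_mul 2).div (hasDerivAt_id r) hr)
  refine h.congr_deriv ?_
  simp only [id, Nat.cast_ofNat]
  ring

lemma muHat_eq_zero_of_horizon {m : ℝ → ℝ} {r : ℝ} (h : m r = r ^ 3 / 2) : muHat m r = 0 := by
  rw [muHat, h]
  field_simp
  ring

lemma tendsto_muHat_nhdsGT {m : ℝ → ℝ} {a : ℝ} (hm : ContinuousWithinAt m (Ici a) a)
    (ha : a ≠ 0) : Tendsto (muHat m) (𝓝[>] a) (𝓝 (muHat m a)) :=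
  (((continuousWithinAt_id.pow 2).sub
    ((continuousWithinAt_const.mul hm).div continuousWithinAt_id ha)).mono
    Ioi_subset_Ici_self).tendsto

lemma yangMills_energy_deriv_nonpos {r m m' μ u u' : ℝ} (hr : 0 < r) (hm : 0 ≤ m) (hm' : 0 ≤ m')
    (hode : r ^ 2 * μ * u' + (2 * m + 2 * r ^ 3) * u = 0) :
    2 * u * u' * μ + u ^ 2 * (2 * r - 2 * (m' * r - m) / r ^ 2) ≤ 0 := by
  have key : (2 * u * u' * μ + u ^ 2 * (2 * r - 2 * (m' * r - m) / r ^ 2)) * r ^ 2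
      = -2 * u ^ 2 * (m + r ^ 3 + m' * r) := by
    have hr2 : 2 * (m' * r - m) / r ^ 2 * r ^ 2 = 2 * (m' * r - m) :=
      div_mul_cancel₀ _ (by positivity)
    linear_combination 2 * u * hode - u ^ 2 * hr2
  refine nonpos_of_mul_nonpos_left ?_ (by positivity : (0 : ℝ) < r ^ 2)
  rw [key]
  have : 0 ≤ m + r ^ 3 + m' * r := by positivity
  nlinarith [sq_nonneg u]

theorem deriv_eq_zero_of_yangMills {w m m' : ℝ → ℝ} {rh : ℝ} (hrh : 0 < rh)
    (hw₁ : ContDiffOn ℝ 1 w (Ici rh)) (hw₂ : ContDiffOn ℝ 2 w (Ioi rh))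
    (hm : ∀ r > rh, HasDerivAt m (m' r) r) (hm'₀ : ∀ r > rh, 0 ≤ m' r) (hm₀ : ∀ r > rh, 0 ≤ m r)
    (hμ : ∀ r > rh, 0 < muHat m r) (hμ₀ : Tendsto (muHat m) (𝓝[>] rh) (𝓝 0))
    (hw : ∀ r > rh, r ^ 2 * muHat m r * deriv (deriv w) r + (2 * m r + 2 * r ^ 3) * deriv w r = 0)
    {r : ℝ} (hr : rh < r) : deriv w r = 0 := by
  have hanti : AntitoneOn (fun x => deriv w x ^ 2 * muHat m x) (Ioi rh) := by
    refine antitoneOn_Ioi_of_hasDerivAt_nonpos (fun x hx => ?_) fun x hx =>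
      yangMills_energy_deriv_nonpos (hrh.trans hx) (hm₀ x hx) (hm'₀ x hx) (hw x hx)
    refine (((hw₂.hasDerivAt_deriv_of_Ioi hx).pow 2).mul
      (hasDerivAt_muHat (hm x hx) (hrh.trans hx).ne')).congr_deriv ?_
    simp only [Pi.pow_apply, Nat.cast_ofNat]
    ring
  exact eq_zero_of_antitoneOn_sq_mul hanti hw₁.tendsto_deriv_nhdsGT hμ₀ hμ hr

theorem limit_black_hole_equations_trivial_general (N : ℕ)
    (rh : ℝ) (hrh : 0 < rh)
    (mh : ℝ → ℝ) (ω : ℕ → ℝ → ℝ)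
    (hmC1 : ContDiffOn ℝ 1 mh (Set.Ici rh))
    (hωC1 : ∀ j ∈ Finset.Icc 1 (N - 1), ContDiffOn ℝ 1 (ω j) (Set.Ici rh))
    (hωC2 : ∀ j ∈ Finset.Icc 1 (N - 1), ContDiffOn ℝ 2 (ω j) (Set.Ioi rh))
    (heqm : ∀ r : ℝ, rh < r →
      HasDerivAt mh
        ((r ^ 2 - 2 * mh r / r) * ∑ j ∈ Finset.Icc 1 (N - 1), deriv (ω j) r ^ 2) r)
    (heqω : ∀ r : ℝ, rh < r → ∀ j ∈ Finset.Icc 1 (N - 1),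
      r ^ 2 * (r ^ 2 - 2 * mh r / r) * deriv (deriv (ω j)) r
        + (2 * mh r + 2 * r ^ 3) * deriv (ω j) r = 0)
    (hhor : mh rh = rh ^ 3 / 2)
    (hμ : ∀ r : ℝ, rh < r → 0 < r ^ 2 - 2 * mh r / r) :
    ∀ r : ℝ, rh ≤ r →
      mh r = rh ^ 3 / 2 ∧ ∀ j ∈ Finset.Icc 1 (N - 1), ω j r = ω j rh := by
  intro r hr
  have hm'₀ : ∀ x > rh, 0 ≤ (x ^ 2 - 2 * mh x / x) * ∑ j ∈ Finset.Icc 1 (N - 1),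
      deriv (ω j) x ^ 2 :=
    fun x hx => mul_nonneg (hμ x hx).le (Finset.sum_nonneg fun _ _ => sq_nonneg _)
  have hmono := monotoneOn_Ici_of_hasDerivAt_nonneg hmC1.continuousOn heqm hm'₀
  have hm₀ : ∀ x > rh, 0 ≤ mh x := fun x hx =>
    (by positivity : (0 : ℝ) ≤ rh ^ 3 / 2).trans (hhor ▸ hmono self_mem_Ici hx.le hx.le)
  have hμ₀ : Tendsto (muHat mh) (𝓝[>] rh) (𝓝 0) :=
    muHat_eq_zero_of_horizon hhor ▸
      tendsto_muHat_nhdsGT (hmC1.continuousOn.continuousWithinAt self_mem_Ici) hrh.ne'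
  have hω' : ∀ j ∈ Finset.Icc 1 (N - 1), ∀ x > rh, deriv (ω j) x = 0 :=
    fun j hj x hx => deriv_eq_zero_of_yangMills hrh (hωC1 j hj) (hωC2 j hj) heqm hm'₀ hm₀ hμ hμ₀
      (fun y hy => heqω y hy j hj) hx
  have hmh' : ∀ x > rh, HasDerivAt mh 0 x := fun x hx => by
    have hsum : ∑ j ∈ Finset.Icc 1 (N - 1), deriv (ω j) x ^ 2 = 0 :=
      Finset.sum_eq_zero fun j hj => by rw [hω' j hj x hx, sq, mul_zero]
    simpa only [hsum, mul_zero] using heqm x hx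
  refine ⟨hhor ▸ eq_of_hasDerivAt_zero_of_le hmC1.continuousOn hmh' hr, fun j hj => ?_⟩
  refine eq_of_hasDerivAt_zero_of_le (hωC1 j hj).continuousOn (fun x hx => ?_) hr
  exact hω' j hj x hx ▸ (((hωC2 j hj).differentiableOn two_ne_zero).differentiableAt
    (Ioi_mem_nhds hx)).hasDerivAt

/-- **Triviality of the ℓ → 0 limit black hole equations.** Fix N ≥ 2 and r_h > 0.
If m̂ ∈ C¹([r_h,∞)) and ω_j ∈ C¹([r_h,∞)) ∩ C²((r_h,∞)) satisfy, for all r > r_h,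
m̂′ = (r² − 2m̂/r)·Σ_j(ω_j′)² and r²(r² − 2m̂/r)ω_j″ + (2m̂ + 2r³)ω_j′ = 0, together
with the horizon condition m̂(r_h) = r_h³/2 (so μ̂(r_h) = 0, μ̂(r) = r² − 2m̂(r)/r) and
μ̂ > 0 on (r_h, ∞), then m̂ ≡ r_h³/2 and every ω_j is constant on [r_h, ∞). -/
theorem limit_black_hole_equations_trivial (N : ℕ) (hN : 2 ≤ N)
    (rh : ℝ) (hrh : 0 < rh)
    (mh : ℝ → ℝ) (ω : ℕ → ℝ → ℝ)
    (hmC1 : ContDiffOn ℝ 1 mh (Set.Ici rh))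
    (hωC1 : ∀ j ∈ Finset.Icc 1 (N - 1), ContDiffOn ℝ 1 (ω j) (Set.Ici rh))
    (hωC2 : ∀ j ∈ Finset.Icc 1 (N - 1), ContDiffOn ℝ 2 (ω j) (Set.Ioi rh))
    (heqm : ∀ r : ℝ, rh < r →
      HasDerivAt mh
        ((r ^ 2 - 2 * mh r / r) * ∑ j ∈ Finset.Icc 1 (N - 1), deriv (ω j) r ^ 2) r)
    (heqω : ∀ r : ℝ, rh < r → ∀ j ∈ Finset.Icc 1 (N - 1),
      r ^ 2 * (r ^ 2 - 2 * mh r / r) * deriv (deriv (ω j)) r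
        + (2 * mh r + 2 * r ^ 3) * deriv (ω j) r = 0)
    (hhor : mh rh = rh ^ 3 / 2)
    (hμ : ∀ r : ℝ, rh < r → 0 < r ^ 2 - 2 * mh r / r) :
    ∀ r : ℝ, rh ≤ r →
      mh r = rh ^ 3 / 2 ∧ ∀ j ∈ Finset.Icc 1 (N - 1), ω j r = ω j rh :=
  limit_black_hole_equations_trivial_general N rh hrh mh ω hmC1 hωC1 hωC2 heqm heqω hhor hμ
end
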